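/- Let R be a commutative unital ring, m ∈ R, and for k ≥ 0 set P_k = (1+m)^k + (1−m)^k and Q_k = (1+m)^k − (1−m)^k; assume P_k is a unit for every k ≥ 1 (in particular 2 = P_1 is a unit), and set a_k = Q_k · P_k⁻¹. Then for every n ≥ 1 the telescoping identity ∏_{k=1}^{n−1} (1 + m a_k) = 2⁻¹ · P_n = 2⁻¹ · ((1+m)^n + (1−m)^n) holds (the empty product for n = 1 being 1). -/

import Mathlib

/-!
Since `(1 ± m)^(k+1) = (1 ± m)^k ± m (1 ± m)^k`, one has `P_{k+1} = P_k + m Q_k`, so each factor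
`1 + m a_k = (P_k + m Q_k) P_k⁻¹` equals `P_{k+1} P_k⁻¹`. The product therefore telescopes to
`P_n P_1⁻¹`, and `P_1 = 2`.
-/

open Finset
open scoped Ring

theorem Finset.prod_Ico_mul_inverse_mul_eq {M₀ : Type*} [CommMonoidWithZero M₀] (f : ℕ → M₀)
    {a n : ℕ} (han : a ≤ n) (hf : ∀ k ∈ Ico a n, IsUnit (f k)) :
    (∏ k ∈ Ico a n, f (k + 1) * (f k)⁻¹ʳ) * f a = f n := by
  induction n, han using Nat.le_induction with
  | base => simp
  | succ n han ih =>
    have hfn : IsUnit (f n) := hf n (mem_Ico.2 ⟨han, n.lt_succ_self⟩)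
    specialize ih fun k hk => hf k (Ico_subset_Ico_right n.le_succ hk)
    calc (∏ k ∈ Ico a (n + 1), f (k + 1) * (f k)⁻¹ʳ) * f a
        = f (n + 1) * (f n)⁻¹ʳ * ((∏ k ∈ Ico a n, f (k + 1) * (f k)⁻¹ʳ) * f a) := by
          rw [prod_Ico_succ_top han, mul_right_comm, mul_comm]
      _ = f (n + 1) := by rw [ih, Ring.inverse_mul_cancel_right _ _ hfn]

theorem one_add_pow_succ_add_one_sub_pow_succ {R : Type*} [CommRing R] (m : R) (k : ℕ) :
    (1 + m) ^ (k + 1) + (1 - m) ^ (k + 1)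
      = (1 + m) ^ k + (1 - m) ^ k + m * ((1 + m) ^ k - (1 - m) ^ k) := by
  ring

theorem one_add_mul_inverse {R : Type*} [Semiring R] {p : R} (c : R) (hp : IsUnit p) :
    1 + c * p⁻¹ʳ = (p + c) * p⁻¹ʳ := by
  rw [add_mul, Ring.mul_inverse_cancel p hp]

/-- The telescoping identity `∏_{k=1}^{n−1} (1 + m a_k) = ((1+m)ⁿ + (1−m)ⁿ)/2`
for the wedge-state matrices `a_k = ((1+m)^k − (1−m)^k)((1+m)^k + (1−m)^k)⁻¹`,
giving the determinant factor in the normalization of the `n`-th wedge state. -/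
theorem msft_wedge_normalization_product
    {R : Type*} [CommRing R] (m : R) (P Q a : ℕ → R)
    (hP : ∀ k, P k = (1 + m) ^ k + (1 - m) ^ k)
    (hQ : ∀ k, Q k = (1 + m) ^ k - (1 - m) ^ k)
    (hPunit : ∀ k, 1 ≤ k → IsUnit (P k))
    (ha : ∀ k, a k = Q k * Ring.inverse (P k)) :
    ∀ n, 1 ≤ n →
      ∏ k ∈ Finset.Ico 1 n, (1 + m * a k) = Ring.inverse (2 : R) * P n := by
  intro n hn
  have hP_one : P 1 = 2 := by rw [hP]; ring
  have hfactor : ∀ k ∈ Ico 1 n, 1 + m * a k = P (k + 1) * (P k)⁻¹ʳ := fun k hk => by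
    rw [ha, ← mul_assoc, one_add_mul_inverse _ (hPunit k (mem_Ico.1 hk).1), hP, hP, hQ,
      one_add_pow_succ_add_one_sub_pow_succ]
  have htelescope := prod_Ico_mul_inverse_mul_eq P hn fun k hk => hPunit k (mem_Ico.1 hk).1
  rw [prod_congr rfl hfactor, eq_comm,
    Ring.inverse_mul_eq_iff_eq_mul _ _ _ (hP_one ▸ hPunit 1 le_rfl), ← htelescope, hP_one, mul_comm]
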